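/- Let {x_n} be a sequence in a cone metric space (X,d), and let {y_n} be a sequence of points of I-LIM^r x which is I-convergent to y. Then y ∈ I-LIM^r x. -/
import Mathlib


open Set

/-- A cone in a real Banach space `E`. -/
structure IsCone {E : Type*} [NormedAddCommGroup E] [NormedSpace ℝ E] (P : Set E) : Prop where
  closed : IsClosed P
  nonempty : P.Nonempty
  ne_zero : P ≠ {0}
  smul_add_mem : ∀ a b : ℝ, 0 ≤ a → 0 ≤ b → ∀ x y : E, x ∈ P → y ∈ P → a • x + b • y ∈ P
  eq_zero_of_mem_neg_mem : ∀ x : E, x ∈ P → -x ∈ P → x = 0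

/-- `d` is a cone metric on `X` with values in `E`, relative to the cone `P`. -/
structure IsConeMetric {X : Type*} {E : Type*} [NormedAddCommGroup E] [NormedSpace ℝ E]
    (P : Set E) (d : X → X → E) : Prop where
  cone : IsCone P
  intP_nonempty : (interior P).Nonempty
  mem_cone : ∀ x y : X, d x y ∈ P
  eq_zero_iff : ∀ x y : X, d x y = 0 ↔ x = y
  symm : ∀ x y : X, d x y = d y x
  triangle : ∀ x y z : X, d x z + d z y - d x y ∈ P

/-- An admissible ideal on ℕ. -/
structure AdmissibleIdeal (I : Set (Set ℕ)) : Prop where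
  union_mem : ∀ A B : Set ℕ, A ∈ I → B ∈ I → A ∪ B ∈ I
  subset_mem : ∀ A B : Set ℕ, B ⊆ A → A ∈ I → B ∈ I
  univ_not_mem : (Set.univ : Set ℕ) ∉ I
  singleton_mem : ∀ n : ℕ, ({n} : Set ℕ) ∈ I

/-- The (AP) condition for an ideal on ℕ. -/
def HasAP (I : Set (Set ℕ)) : Prop :=
  ∀ A : ℕ → Set ℕ, (∀ i, A i ∈ I) → (∀ i j, i ≠ j → Disjoint (A i) (A j)) →
    ∃ B : ℕ → Set ℕ, (∀ i, (symmDiff (A i) (B i)).Finite) ∧ (⋃ j, B j) ∈ I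

/-- Rough convergence of degree `r` of a sequence to `l` in a cone metric space. -/
def RoughConv {X : Type*} {E : Type*} [NormedAddCommGroup E] [NormedSpace ℝ E]
    (P : Set E) (d : X → X → E) (x : ℕ → X) (r : E) (l : X) : Prop :=
  ∀ ε ∈ interior P, ∃ m : ℕ, ∀ n ≥ m, (r + ε) - d (x n) l ∈ interior P

/-- Rough `I`-convergence of degree `r` of a sequence to `l` in a cone metric space. -/
def RoughIConv {X : Type*} {E : Type*} [NormedAddCommGroup E] [NormedSpace ℝ E]
    (P : Set E) (d : X → X → E) (I : Set (Set ℕ)) (x : ℕ → X) (r : E) (l : X) : Prop :=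
  ∀ ε ∈ interior P, {n : ℕ | (r + ε) - d (x n) l ∉ interior P} ∈ I

/-- Rough `I*`-convergence of degree `r` of a sequence to `l` in a cone metric space:
there is a set `M` in the filter associated to `I` along which the sequence is
rough convergent of degree `r` to `l`. -/
def RoughIStarConv {X : Type*} {E : Type*} [NormedAddCommGroup E] [NormedSpace ℝ E]
    (P : Set E) (d : X → X → E) (I : Set (Set ℕ)) (x : ℕ → X) (r : E) (l : X) : Prop :=
  ∃ M : Set ℕ, Mᶜ ∈ I ∧
    ∀ ε ∈ interior P, ∃ p : ℕ, ∀ n ∈ M, n ≥ p → (r + ε) - d (x n) l ∈ interior P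

/-- `I`-convergence of a sequence to `l` in a cone metric space. -/
def IConv {X : Type*} {E : Type*} [NormedAddCommGroup E] [NormedSpace ℝ E]
    (P : Set E) (d : X → X → E) (I : Set (Set ℕ)) (x : ℕ → X) (l : X) : Prop :=
  ∀ ε ∈ interior P, {n : ℕ | ε - d (x n) l ∉ interior P} ∈ I

/-- A bounded sequence in a cone metric space. -/
def ConeBounded {X : Type*} {E : Type*} [NormedAddCommGroup E] [NormedSpace ℝ E]
    (P : Set E) (d : X → X → E) (x : ℕ → X) : Prop :=
  ∃ y : X, ∃ M ∈ interior P, ∀ n : ℕ, M - d (x n) y ∈ interior P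

/-- An `I`-bounded sequence in a cone metric space. -/
def IBounded {X : Type*} {E : Type*} [NormedAddCommGroup E] [NormedSpace ℝ E]
    (P : Set E) (d : X → X → E) (I : Set (Set ℕ)) (x : ℕ → X) : Prop :=
  ∃ y : X, ∃ M ∈ interior P, {n : ℕ | M - d (x n) y ∉ interior P} ∈ I

/-- `c` is an `I`-cluster point of the sequence `x`. -/
def IClusterPt {X : Type*} {E : Type*} [NormedAddCommGroup E] [NormedSpace ℝ E]
    (P : Set E) (d : X → X → E) (I : Set (Set ℕ)) (x : ℕ → X) (c : X) : Prop :=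
  ∀ ε ∈ interior P, {k : ℕ | ε - d (x k) c ∈ interior P} ∉ I

/-- `P` is a normal cone with normal constant `K`. -/
def IsNormalConeWith {E : Type*} [NormedAddCommGroup E] [NormedSpace ℝ E]
    (P : Set E) (K : ℝ) : Prop :=
  0 < K ∧ ∀ x y : E, x ∈ P → y - x ∈ P → ‖x‖ ≤ K * ‖y‖


lemma int_add_mem {E : Type*} [NormedAddCommGroup E] [NormedSpace ℝ E]
    {P : Set E} (hP : IsCone P) {a b : E} (ha : a ∈ interior P) (hb : b ∈ P) :
    a + b ∈ interior P := by
  have hopen : IsOpen ((· + b) '' interior P) :=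
    (Homeomorph.addRight b).isOpenMap _ isOpen_interior
  have hsub : (· + b) '' interior P ⊆ P := by
    rintro _ ⟨t, ht, rfl⟩
    have := hP.smul_add_mem 1 1 zero_le_one zero_le_one t b (interior_subset ht) hb
    simpa using this
  exact interior_maximal hsub hopen ⟨a, ha, rfl⟩

lemma int_smul_mem {E : Type*} [NormedAddCommGroup E] [NormedSpace ℝ E]
    {P : Set E} (hP : IsCone P) {a : E} (ha : a ∈ interior P) :
    (2⁻¹ : ℝ) • a ∈ interior P := by
  have hopen : IsOpen (((2⁻¹ : ℝ) • ·) '' interior P) :=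
    isOpenMap_smul₀ (by norm_num : (2⁻¹ : ℝ) ≠ 0) _ isOpen_interior
  have hsub : (((2⁻¹ : ℝ) • ·) '' interior P) ⊆ P := by
    rintro _ ⟨t, ht, rfl⟩
    have := hP.smul_add_mem 2⁻¹ 0 (by norm_num) le_rfl t t (interior_subset ht) (interior_subset ht)
    simpa using this
  exact interior_maximal hsub hopen ⟨a, ha, rfl⟩

theorem stmt10 {X E : Type*} [NormedAddCommGroup E] [NormedSpace ℝ E] [CompleteSpace E]
    (P : Set E) (d : X → X → E) (hd : IsConeMetric P d)
    (I : Set (Set ℕ)) (hI : AdmissibleIdeal I)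
    (x : ℕ → X) (r : E) (hr : r ∈ interior P ∨ r = 0)
    (y : ℕ → X) (hy : ∀ n : ℕ, RoughIConv P d I x r (y n))
    (l : X) (hyl : IConv P d I y l) : RoughIConv P d I x r l := by
  intro ε hε
  set ε' := (2⁻¹ : ℝ) • ε with hε'def
  have hε' : ε' ∈ interior P := int_smul_mem hd.cone hε
  have hA : {n : ℕ | ε' - d (y n) l ∉ interior P} ∈ I := hyl ε' hε'
  have hcne : ({n : ℕ | ε' - d (y n) l ∉ interior P})ᶜ.Nonempty := by
    by_contra h
    rw [Set.not_nonempty_iff_eq_empty, Set.compl_empty_iff] at h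
    exact hI.univ_not_mem (h ▸ hA)
  obtain ⟨m, hm⟩ := hcne
  have hym : ε' - d (y m) l ∈ interior P := not_not.mp hm
  have hB : {n : ℕ | (r + ε') - d (x n) (y m) ∉ interior P} ∈ I := hy m ε' hε'
  refine hI.subset_mem _ _ ?_ hB
  intro n hn
  by_contra hB'
  apply hn
  have h1 : (r + ε') - d (x n) (y m) ∈ interior P := not_not.mp hB'
  have h2 : ((r + ε') - d (x n) (y m)) + (ε' - d (y m) l) ∈ interior P :=
    int_add_mem hd.cone h1 (interior_subset hym)
  have h3 : (((r + ε') - d (x n) (y m)) + (ε' - d (y m) l))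
      + (d (x n) (y m) + d (y m) l - d (x n) l) ∈ interior P :=
    int_add_mem hd.cone h2 (hd.triangle (x n) l (y m))
  have key : (r + ε) - d (x n) l = (((r + ε') - d (x n) (y m)) + (ε' - d (y m) l))
      + (d (x n) (y m) + d (y m) l - d (x n) l) := by
    rw [hε'def]; module
  rw [key]
  exact h3
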